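/- Let m ∈ -(1/2)ℕ, ε ∈ {0,1}, τ ∈ ℍ, and let φ be meromorphic on ℂ satisfying φ(z+λτ+μ) = (-1)^{2mμ+λε} e^{-2πim(λ²τ+2λz)} φ(z) for all integers λ, μ. Then the function u ↦ Res_{v=u}[φ(v) F_{-m,ε}(z,v;τ)] is invariant under translation of u by any lattice point λτ + μ (λ, μ ∈ ℤ), for any fixed z not a pole of φ. -/
import Mathlib

noncomputable section
open Complex Filter Set

/-- `e x = exp(2πix)` -/
def e (x : ℂ) : ℂ := Complex.exp (2 * Real.pi * Complex.I * x)

/-- The level `2M` Appell–Lerch sum. -/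
def appell (M : ℝ) (ε : ℕ) (z u τ : ℂ) : ℂ :=
  e (M * (z - u)) * ∑' n : ℤ,
    (-1 : ℂ) ^ (n * (ε : ℤ)) * e (-(u * (2 * M * n))) * e (τ * (M * n * (n + 1)))
      / (1 - e (τ * n) * e (z - u))

/-- Residue of `g` at `u`, as the limit of `(2πi)⁻¹ ∮_{|v-u|=r} g(v) dv` as `r → 0⁺`. -/
def residue (g : ℂ → ℂ) (u : ℂ) : ℂ :=
  limUnder (nhdsWithin (0 : ℝ) (Set.Ioi 0))
    (fun r : ℝ => (2 * Real.pi * Complex.I)⁻¹ * (∮ v in C(u, r), g v))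

lemma e_add (x y : ℂ) : e (x + y) = e x * e y := by
  simp [e, mul_add, Complex.exp_add]

lemma e_int (n : ℤ) : e n = 1 := by
  rw [e, show 2 * (Real.pi:ℂ) * Complex.I * n = n * (2 * Real.pi * Complex.I) by ring]
  exact Complex.exp_int_mul_two_pi_mul_I n

lemma neg_one_zpow_eq_exp (n : ℤ) :
    ((-1:ℂ))^n = Complex.exp (n * (Real.pi * Complex.I)) := by
  rw [Complex.exp_int_mul, Complex.exp_pi_mul_I]

lemma appell_translate (M : ℝ) (k : ℕ) (hM : M * 2 = k) (ε : ℕ) (z u τ : ℂ) (lam μ : ℤ) :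
    appell M ε z (u + lam * τ + μ) τ
      = (-1:ℂ)^(lam * (ε : ℤ))
          * e (-(M:ℂ) * μ - M * lam ^ 2 * τ - 2 * M * lam * u)
          * appell M ε z u τ := by
  have hM' : (M:ℂ) * 2 = (k:ℂ) := by exact_mod_cast congrArg (Complex.ofReal) hM
  unfold appell
  have key : ∀ n : ℤ,
      (-1:ℂ) ^ ((n + lam) * (ε:ℤ))
          * e (-((u + lam * τ + μ) * (2 * (M:ℂ) * ((n + lam : ℤ) : ℂ))))
          * e (τ * ((M:ℂ) * ((n + lam : ℤ) : ℂ) * (((n + lam : ℤ) : ℂ) + 1)))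
        / (1 - e (τ * ((n + lam : ℤ) : ℂ)) * e (z - (u + lam * τ + μ)))
      = ((-1:ℂ)^(lam * (ε:ℤ)) * e (-2 * (M:ℂ) * lam * u + M * τ * (lam - lam ^ 2))) *
        ((-1:ℂ) ^ (n * (ε:ℤ)) * e (-(u * (2 * (M:ℂ) * n))) * e (τ * ((M:ℂ) * n * (n + 1)))
          / (1 - e (τ * n) * e (z - u))) := by
    intro n
    have hden : e (τ * ((n + lam : ℤ) : ℂ)) * e (z - (u + lam * τ + μ))
        = e (τ * n) * e (z - u) := by
      rw [← e_add, ← e_add,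
        show τ * ((n + lam : ℤ) : ℂ) + (z - (u + lam * τ + μ))
            = (τ * n + (z - u)) + ((-μ : ℤ) : ℂ) by push_cast; ring,
        e_add, e_int, mul_one]
    rw [hden, ← mul_div_assoc]
    congr 1
    have h2 : e (-((u + lam * τ + μ) * (2 * (M:ℂ) * ((n + lam : ℤ) : ℂ))))
          * e (τ * ((M:ℂ) * ((n + lam : ℤ) : ℂ) * (((n + lam : ℤ) : ℂ) + 1)))
        = e (-2 * (M:ℂ) * lam * u + M * τ * (lam - lam ^ 2))
          * (e (-(u * (2 * (M:ℂ) * n))) * e (τ * ((M:ℂ) * n * (n + 1)))) := by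
      rw [← e_add, ← e_add, ← e_add,
        show -((u + lam * τ + μ) * (2 * (M:ℂ) * ((n + lam : ℤ) : ℂ)))
              + τ * ((M:ℂ) * ((n + lam : ℤ) : ℂ) * (((n + lam : ℤ) : ℂ) + 1))
            = (-2 * (M:ℂ) * lam * u + M * τ * (lam - lam ^ 2)
                + (-(u * (2 * (M:ℂ) * n)) + τ * ((M:ℂ) * n * (n + 1))))
              + ((-(k : ℤ) * (n + lam) * μ : ℤ) : ℂ) by
          push_cast
          linear_combination (-(μ:ℂ) * ((n:ℂ) + (lam:ℂ))) * hM',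
        e_add, e_int, mul_one]
    rw [show (n + lam) * (ε:ℤ) = n * (ε:ℤ) + lam * (ε:ℤ) by ring,
      zpow_add₀ (by norm_num : (-1:ℂ) ≠ 0)]
    linear_combination ((-1:ℂ) ^ (n * (ε:ℤ)) * (-1:ℂ) ^ (lam * (ε:ℤ))) * h2
  have hre := (Equiv.tsum_eq (Equiv.addRight lam)
    (fun n : ℤ =>
      (-1:ℂ) ^ (n * (ε:ℤ)) * e (-((u + lam * τ + μ) * (2 * (M:ℂ) * n)))
          * e (τ * ((M:ℂ) * n * (n + 1)))
        / (1 - e (τ * n) * e (z - (u + lam * τ + μ))))).symm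
  simp only [Equiv.coe_addRight] at hre
  rw [hre, tsum_congr key, tsum_mul_left]
  have hpre : e ((M:ℂ) * (z - (u + lam * τ + μ)))
        * e (-2 * (M:ℂ) * lam * u + M * τ * (lam - lam ^ 2))
      = e (-(M:ℂ) * μ - M * lam ^ 2 * τ - 2 * M * lam * u) * e ((M:ℂ) * (z - u)) := by
    rw [← e_add, ← e_add]
    congr 1
    ring
  set S := ∑' n : ℤ,
      (-1:ℂ) ^ (n * (ε:ℤ)) * e (-(u * (2 * (M:ℂ) * n))) * e (τ * ((M:ℂ) * n * (n + 1)))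
        / (1 - e (τ * n) * e (z - u)) with hS
  linear_combination ((-1:ℂ) ^ (lam * (ε:ℤ)) * S) * hpre

theorem residue_translation_invariant
    (τ : ℂ) (hτ : 0 < τ.im)
    (m : ℝ) (hm : ∃ k : ℕ, 0 < k ∧ m = -((k : ℝ) / 2))
    (ε : ℕ) (hε : ε = 0 ∨ ε = 1)
    (φ : ℂ → ℂ) (hmero : MeromorphicOn φ Set.univ)
    (hell : ∀ (z : ℂ) (lam μ : ℤ), φ (z + lam * τ + μ)
      = Complex.exp (Real.pi * Complex.I * (2 * m * μ + lam * ε))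
          * Complex.exp (-2 * Real.pi * Complex.I * m * (lam ^ 2 * τ + 2 * lam * z)) * φ z)
    (z : ℂ) (hz : DifferentiableAt ℂ φ z)  -- `z` is not a pole of `φ`
    (lam μ : ℤ) (u : ℂ) :
    residue (fun v => φ v * appell (-m) ε z v τ) (u + lam * τ + μ)
      = residue (fun v => φ v * appell (-m) ε z v τ) u := by
  obtain ⟨k, hk, rfl⟩ := hm
  have hMk : (-(-(((k:ℝ)) / 2))) * 2 = (k:ℝ) := by ring
  have hper : ∀ v : ℂ,
      φ (v + lam * τ + μ) * appell (-(-((k:ℝ) / 2))) ε z (v + lam * τ + μ) τ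
        = φ v * appell (-(-((k:ℝ) / 2))) ε z v τ := by
    intro v
    rw [hell v lam μ, appell_translate _ k hMk ε z v τ lam μ,
      neg_one_zpow_eq_exp, e]
    have hone :
        Complex.exp (Real.pi * Complex.I * (2 * (-( (k:ℝ) / 2):ℝ) * μ + lam * ε))
          * Complex.exp (-2 * Real.pi * Complex.I * (-(((k:ℝ)) / 2):ℝ) * (lam ^ 2 * τ + 2 * lam * v))
          * Complex.exp (((lam * (ε:ℤ) : ℤ) : ℂ) * (Real.pi * Complex.I))
          * Complex.exp (2 * Real.pi * Complex.I *
              (-((-(-(((k:ℝ)) / 2)):ℝ):ℂ) * μ - ((-(-(((k:ℝ)) / 2)):ℝ):ℂ) * lam ^ 2 * τ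
                - 2 * ((-(-(((k:ℝ)) / 2)):ℝ):ℂ) * lam * v)) = 1 := by
      rw [← Complex.exp_add, ← Complex.exp_add, ← Complex.exp_add,
        show (Real.pi:ℂ) * Complex.I * (2 * (-( (k:ℝ) / 2):ℝ) * μ + lam * ε)
            + -2 * Real.pi * Complex.I * (-(((k:ℝ)) / 2):ℝ) * (lam ^ 2 * τ + 2 * lam * v)
            + ((lam * (ε:ℤ) : ℤ) : ℂ) * (Real.pi * Complex.I)
            + 2 * Real.pi * Complex.I *
              (-((-(-(((k:ℝ)) / 2)):ℝ):ℂ) * μ - ((-(-(((k:ℝ)) / 2)):ℝ):ℂ) * lam ^ 2 * τ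
                - 2 * ((-(-(((k:ℝ)) / 2)):ℝ):ℂ) * lam * v)
            = ((lam * ε - k * μ : ℤ) : ℂ) * (2 * Real.pi * Complex.I) by push_cast; ring]
      exact Complex.exp_int_mul_two_pi_mul_I _
    linear_combination (φ v * appell (-(-((k:ℝ) / 2))) ε z v τ) * hone
  -- now the residue part
  have hcirc : ∀ r : ℝ,
      (∮ v in C(u + lam * τ + μ, r), φ v * appell (-(-((k:ℝ) / 2))) ε z v τ)
        = ∮ v in C(u, r), φ v * appell (-(-((k:ℝ) / 2))) ε z v τ := by
    intro r
    simp only [circleIntegral, deriv_circleMap, circleMap, zero_add]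
    refine intervalIntegral.integral_congr fun θ _ => ?_
    have := hper (u + r * Complex.exp (θ * Complex.I))
    rw [show u + lam * τ + μ + r * Complex.exp (θ * Complex.I)
        = u + r * Complex.exp (θ * Complex.I) + lam * τ + μ by ring] at *
    simp only [this]
  unfold residue
  congr 1
  funext r
  rw [hcirc r]
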